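/- arXiv:1010.2167 — 3 statements merged into one kernel-verified Lean document; each statement's English description precedes it below -/
import Mathlib

section
/- The graph Cay(ℤ₁₃;1,5) contains no clique of size 3 and no independent set of size 5. -/
/-!
Translations of `ℤ₁₃` are automorphisms, so a clique may be assumed to contain `0`, its other
vertices being neighbours of `0`. What remains is a finite check: no two of `±1, ±5` differ by
`±1` or `±5`; and the eight non-neighbours `2, 3, 4, 9, 10, 11, 6, 7` of `0` form, in this order,
an 8-cycle of the graph with the two chords `2 — 10` and `3 — 11`, which hit both independent
4-sets `{2, 4, 10, 6}` and `{3, 9, 11, 7}` of the cycle.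
-/

/-- The Cayley graph of `ℤ₁₃` with connection set `{±1, ±5}`. -/
def cayZ13 : SimpleGraph (ZMod 13) where
  Adj i j := j - i = 1 ∨ j - i = 5 ∨ j - i = 8 ∨ j - i = 12
  symm := by
    constructor
    intro i j h
    have e : i - j = -(j - i) := by ring
    rcases h with h | h | h | h <;> rw [h] at e <;> rw [e] <;> decide
  loopless := by
    constructor
    intro i h
    rw [sub_self] at h
    revert h
    decide

namespace SimpleGraph

variable {V : Type*} [AddGroup V]

def IsTranslationInvariant (G : SimpleGraph V) : Prop :=
  ∀ a x y, G.Adj (x + a) (y + a) ↔ G.Adj x y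

namespace IsTranslationInvariant

variable {G : SimpleGraph V}

theorem compl (hG : G.IsTranslationInvariant) : Gᶜ.IsTranslationInvariant := by
  intro a x y
  simp only [compl_adj, hG a, ne_eq, add_left_inj]

theorem cliqueFree_succ (hG : G.IsTranslationInvariant) {n : ℕ}
    (h : ∀ v : Fin n → V, ¬(0 :: List.ofFn v).Pairwise G.Adj) : G.CliqueFree (n + 1) := by
  rw [cliqueFree_iff]
  refine ⟨fun f => h (fun i => f i.succ - f 0) ?_⟩
  have hf : (List.ofFn fun i => f i - f 0).Pairwise G.Adj :=
    List.pairwise_ofFn.2 fun i j hij => by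
      rw [sub_eq_add_neg, sub_eq_add_neg, hG]
      exact f.toHom.map_adj ((top_adj _ _).2 hij.ne)
  simpa only [List.ofFn_succ, sub_self] using hf

end IsTranslationInvariant

end SimpleGraph

instance : DecidableRel cayZ13.Adj := fun _ _ =>
  inferInstanceAs (Decidable (_ ∨ _ ∨ _ ∨ _))

theorem cayZ13_isTranslationInvariant : cayZ13.IsTranslationInvariant := by
  intro a x y
  simp only [cayZ13, add_sub_add_right_eq_sub]

theorem cayZ13_not_pairwise_adj : ∀ b c : ZMod 13, ¬[0, b, c].Pairwise cayZ13.Adj := by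
  decide

theorem cayZ13_compl_not_pairwise_adj :
    ∀ b c d e : ZMod 13, ¬[0, b, c, d, e].Pairwise cayZ13ᶜ.Adj := by
  decide

/-- `Cay(ℤ₁₃; 1, 5)` contains no clique of size `3` and no independent set of size `5`. -/
theorem cayZ13_no_3clique_no_5indep :
    cayZ13.CliqueFree 3 ∧ cayZ13ᶜ.CliqueFree 5 := by
  refine ⟨cayZ13_isTranslationInvariant.cliqueFree_succ fun v => ?_,
    cayZ13_isTranslationInvariant.compl.cliqueFree_succ fun v => ?_⟩
  · simpa [List.ofFn_succ] using cayZ13_not_pairwise_adj (v 0) (v 1)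
  · simpa [List.ofFn_succ] using cayZ13_compl_not_pairwise_adj (v 0) (v 1) (v 2) (v 3)
end

section
/- Let G₁ be a simple graph on vertex set V₁ with no clique of size k₁ + 1 and no independent set of size l₁ + 1, and let G₂ be a simple graph on vertex set V₂ with no clique of size k₂ + 1 and no independent set of size l₂ + 1. Define the lexicographic product G₁[G₂] on vertex set V₁ × V₂ by making (u₁,u₂) and (v₁,v₂) adjacent if and only if u₁ is adjacent to v₁ in G₁, or u₁ = v₁ and u₂ is adjacent to v₂ in G₂. Then G₁[G₂] has no clique of size k₁·k₂ + 1 and no independent set of size l₁·l₂ + 1. -/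
/-- The lexicographic product `G₁[G₂]` of two simple graphs: `(u₁, u₂)` and `(v₁, v₂)`
are adjacent iff `u₁ ~ v₁` in `G₁`, or `u₁ = v₁` and `u₂ ~ v₂` in `G₂`. -/
def lexProd {V₁ V₂ : Type*} (G₁ : SimpleGraph V₁) (G₂ : SimpleGraph V₂) :
    SimpleGraph (V₁ × V₂) where
  Adj u v := G₁.Adj u.1 v.1 ∨ (u.1 = v.1 ∧ G₂.Adj u.2 v.2)
  symm := by
    constructor
    rintro u v (h | ⟨h1, h2⟩)
    · exact Or.inl h.symm
    · exact Or.inr ⟨h1.symm, h2.symm⟩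
  loopless := by
    constructor
    rintro u (h | ⟨-, h⟩)
    · exact G₁.loopless.irrefl _ h
    · exact G₂.loopless.irrefl _ h

/-! A clique of `G₁[G₂]` projects onto a clique of `G₁` and meets each fibre `{a} × V₂` in a
clique of `G₂`, so it has at most `k₁ k₂` vertices. Complementation commutes with the
lexicographic product, which turns the bound on cliques into the bound on independent sets. -/

open Finset SimpleGraph

theorem SimpleGraph.IsClique.card_le_of_cliqueFree {V : Type*} {G : SimpleGraph V} {k : ℕ}
    {s : Finset V} (hs : G.IsClique (s : Set V)) (hG : G.CliqueFree (k + 1)) : #s ≤ k := by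
  by_contra! hk
  obtain ⟨t, hts, htk⟩ := exists_subset_card_eq hk
  exact hG t ⟨hs.subset (by simpa using hts), htk⟩

section LexProd

variable {V₁ V₂ : Type*} {G₁ : SimpleGraph V₁} {G₂ : SimpleGraph V₂}

@[simp]
theorem lexProd_adj {u v : V₁ × V₂} :
    (lexProd G₁ G₂).Adj u v ↔ G₁.Adj u.1 v.1 ∨ (u.1 = v.1 ∧ G₂.Adj u.2 v.2) :=
  Iff.rfl

theorem lexProd_compl : (lexProd G₁ G₂)ᶜ = lexProd G₁ᶜ G₂ᶜ := by
  ext ⟨u₁, u₂⟩ ⟨v₁, v₂⟩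
  simp only [compl_adj, lexProd_adj, ne_eq, Prod.mk.injEq]
  by_cases h : u₁ = v₁
  · subst h; simp
  · simp [h]

theorem SimpleGraph.IsClique.lexProd_image_fst {s : Set (V₁ × V₂)}
    (hs : (lexProd G₁ G₂).IsClique s) : G₁.IsClique (Prod.fst '' s) := by
  rintro _ ⟨u, hu, rfl⟩ _ ⟨v, hv, rfl⟩ hne
  obtain h | ⟨h, -⟩ := hs hu hv (fun huv ↦ hne (congrArg Prod.fst huv))
  exacts [h, absurd h hne]

theorem SimpleGraph.IsClique.lexProd_preimage_mk {s : Set (V₁ × V₂)}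
    (hs : (lexProd G₁ G₂).IsClique s) (a : V₁) : G₂.IsClique (Prod.mk a ⁻¹' s) := by
  intro x hx y hy hne
  obtain h | ⟨-, h⟩ := hs hx hy (by simpa using hne)
  exacts [absurd h (G₁.irrefl), h]

theorem lexProd_cliqueFree {k₁ k₂ : ℕ} (h₁ : G₁.CliqueFree (k₁ + 1))
    (h₂ : G₂.CliqueFree (k₂ + 1)) : (lexProd G₁ G₂).CliqueFree (k₁ * k₂ + 1) := by
  classical
  rintro s ⟨hs, hcard⟩
  have hfibre (a : V₁) : #{p ∈ s | p.1 = a} ≤ k₂ := by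
    have hinj : Set.InjOn Prod.snd (↑{p ∈ s | p.1 = a} : Set (V₁ × V₂)) :=
      fun p hp q hq hpq ↦ Prod.ext ((mem_filter.mp hp).2.trans (mem_filter.mp hq).2.symm) hpq
    rw [← card_image_of_injOn hinj]
    refine (hs.lexProd_preimage_mk a |>.subset ?_).card_le_of_cliqueFree h₂
    rintro _ hy
    obtain ⟨p, hp, rfl⟩ := mem_image.mp hy
    obtain ⟨hps, rfl⟩ := mem_filter.mp hp
    exact hps
  have hbase : #(s.image Prod.fst) ≤ k₁ :=
    IsClique.card_le_of_cliqueFree (by rw [coe_image]; exact hs.lexProd_image_fst) h₁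
  have : #s ≤ k₁ * k₂ := calc
    #s ≤ k₂ * #(s.image Prod.fst) := card_le_mul_card_image s k₂ fun a _ ↦ hfibre a
    _ ≤ k₂ * k₁ := Nat.mul_le_mul_left k₂ hbase
    _ = k₁ * k₂ := mul_comm k₂ k₁
  omega

end LexProd

theorem lexProd_cliqueFree_indepFree_general {V₁ V₂ : Type*}
    (G₁ : SimpleGraph V₁) (G₂ : SimpleGraph V₂) (k₁ l₁ k₂ l₂ : ℕ)
    (h₁k : G₁.CliqueFree (k₁ + 1)) (h₁l : G₁ᶜ.CliqueFree (l₁ + 1))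
    (h₂k : G₂.CliqueFree (k₂ + 1)) (h₂l : G₂ᶜ.CliqueFree (l₂ + 1)) :
    (lexProd G₁ G₂).CliqueFree (k₁ * k₂ + 1) ∧
      (lexProd G₁ G₂)ᶜ.CliqueFree (l₁ * l₂ + 1) := by
  rw [lexProd_compl]
  exact ⟨lexProd_cliqueFree h₁k h₂k, lexProd_cliqueFree h₁l h₂l⟩

/-- If `G₁` has no clique of size `k₁ + 1` and no independent set of size `l₁ + 1`, and
`G₂` has no clique of size `k₂ + 1` and no independent set of size `l₂ + 1`, then the
lexicographic product `G₁[G₂]` has no clique of size `k₁k₂ + 1` and no independent set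
of size `l₁l₂ + 1`. -/
theorem lexProd_cliqueFree_indepFree {V₁ V₂ : Type*} [Fintype V₁] [Fintype V₂]
    (G₁ : SimpleGraph V₁) (G₂ : SimpleGraph V₂) (k₁ l₁ k₂ l₂ : ℕ)
    (h₁k : G₁.CliqueFree (k₁ + 1)) (h₁l : G₁ᶜ.CliqueFree (l₁ + 1))
    (h₂k : G₂.CliqueFree (k₂ + 1)) (h₂l : G₂ᶜ.CliqueFree (l₂ + 1)) :
    (lexProd G₁ G₂).CliqueFree (k₁ * k₂ + 1) ∧
      (lexProd G₁ G₂)ᶜ.CliqueFree (l₁ * l₂ + 1) :=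
  lexProd_cliqueFree_indepFree_general G₁ G₂ k₁ l₁ k₂ l₂ h₁k h₁l h₂k h₂l
end

section
/- Every simple graph with more than 13 vertices contains either a clique of size 5 or an independent set of size 3. Consequently, 13 is the largest possible number of segments in a (4,2)-arrangement. -/
noncomputable section

/-- The Euclidean plane. -/
abbrev Plane : Type := EuclideanSpace ℝ (Fin 2)

/-- A nondegenerate closed straight-line segment in the plane,
given by its two (distinct) endpoints. -/
structure Seg : Type where
  a : Plane
  b : Plane
  ne : a ≠ b

/-- The set of points of a segment. -/
def Seg.carrier (s : Seg) : Set Plane := segment ℝ s.a s.b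

/-- Two segments cross if they have a common point; otherwise they are disjoint. -/
def Seg.Crosses (s t : Seg) : Prop := (s.carrier ∩ t.carrier).Nonempty

/-- The set of endpoints of the segments of a finite family. -/
def segEndpoints (M : Finset Seg) : Set Plane := {p | ∃ s ∈ M, p = s.a ∨ p = s.b}

/-- A finite set of segments is an arrangement if it is in general position,
i.e. no three of the endpoints are collinear. -/
def IsArrangement (M : Finset Seg) : Prop :=
  ∀ p ∈ segEndpoints M, ∀ q ∈ segEndpoints M, ∀ r ∈ segEndpoints M,
    p ≠ q → p ≠ r → q ≠ r → ¬ Collinear ℝ ({p, q, r} : Set Plane)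

/-- A `(k,l)`-arrangement: an arrangement with at most `k` pairwise crossing and
at most `l` pairwise disjoint segments. -/
def IsKLArrangement (M : Finset Seg) (k l : ℕ) : Prop :=
  IsArrangement M ∧
  (∀ S ⊆ M, (∀ s ∈ S, ∀ t ∈ S, s ≠ t → s.Crosses t) → S.card ≤ k) ∧
  (∀ S ⊆ M, (∀ s ∈ S, ∀ t ∈ S, s ≠ t → ¬ s.Crosses t) → S.card ≤ l)

/-- The intersection graph of an arrangement of segments. -/
def interGraph (M : Finset Seg) : SimpleGraph {s : Seg // s ∈ M} where
  Adj s t := s ≠ t ∧ s.1.Crosses t.1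
  symm := by
    constructor
    rintro s t ⟨hne, p, hp⟩
    exact ⟨hne.symm, p, hp.2, hp.1⟩
  loopless := by
    constructor
    rintro s ⟨hne, -⟩
    exact hne rfl

/-- An arrangement `M` is flattenable if for every `ε > 0` there is an arrangement
with the same intersection graph whose segments all have one endpoint in a disc of radius
`ε` around `c₁` and the other endpoint in a disc of radius `ε` around `c₂`, where
`c₁`, `c₂` are at distance `1`. -/
def Flattenable (M : Finset Seg) : Prop :=
  ∀ ε : ℝ, 0 < ε → ∃ (M' : Finset Seg) (c₁ c₂ : Plane),
    IsArrangement M' ∧ Nonempty (interGraph M' ≃g interGraph M) ∧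
    dist c₁ c₂ = 1 ∧
    ∀ s ∈ M', (dist s.a c₁ ≤ ε ∧ dist s.b c₂ ≤ ε) ∨
              (dist s.b c₁ ≤ ε ∧ dist s.a c₂ ≤ ε)

/-! In a graph with no `K_{k+1}` and no independent triple, the non-neighbours of a vertex `v`
form a clique (two non-adjacent ones would make an independent triple with `v`), so there are at
most `k` of them, and the neighbourhood of `v` has no `K_k`. This gives
`R(k+1, 3) ≤ R(k, 3) + k + 1`, hence `R(4, 3) ≤ 10`, which parity improves to `9`: on `9` vertices
every vertex would have degree exactly `5`, impossible on an odd number of vertices. Then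
`R(5, 3) ≤ 14`, and the intersection graph of a `(4,2)`-arrangement has no `K₅` and no
independent triple. -/

namespace SimpleGraph

variable {V : Type*} {G : SimpleGraph V}

theorem induce_compl (s : Set V) : (G.induce s)ᶜ = Gᶜ.induce s := by
  ext a b
  simp [Subtype.ext_iff]

theorem IndepSetFree.induce {n : ℕ} (h : G.IndepSetFree n) (s : Set V) :
    (G.induce s).IndepSetFree n := by
  rw [← cliqueFree_compl, induce_compl, cliqueFree_induce_iff]
  exact fun t _ => (cliqueFree_compl G).2 h t

theorem CliqueFree.induce_neighborSet {k : ℕ} (h : G.CliqueFree (k + 1)) (v : V) :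
    (G.induce (G.neighborSet v)).CliqueFree k := by
  rw [cliqueFree_induce_iff]
  simpa using CliqueFreeOn.of_succ G ((cliqueFreeOn_univ G).2 h) (Set.mem_univ v)

theorem IsClique.card_le_of_cliqueFree_s16 {k : ℕ} {s : Finset V} (hs : G.IsClique (s : Set V))
    (h : G.CliqueFree (k + 1)) : s.card ≤ k := by
  by_contra! hk
  obtain ⟨t, hts, ht⟩ := Finset.exists_subset_card_eq hk
  exact h t ⟨hs.subset (Finset.coe_subset.2 hts), ht⟩

theorem degree_compl_le_of_cliqueFree [Fintype V] [DecidableEq V] [DecidableRel G.Adj] {k : ℕ}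
    (hk : G.CliqueFree (k + 1)) (h3 : G.IndepSetFree 3) (v : V) : Gᶜ.degree v ≤ k := by
  have hclique : G.IsClique (Gᶜ.neighborFinset v : Set V) := by
    rw [coe_neighborFinset, ← isIndepSet_compl]
    exact isIndepSet_neighborSet_of_triangleFree Gᶜ ((cliqueFree_compl G).2 h3) v
  exact hclique.card_le_of_cliqueFree_s16 hk

theorem card_le_degree_add_of_cliqueFree [Fintype V] [DecidableRel G.Adj] {k : ℕ}
    (hk : G.CliqueFree (k + 1)) (h3 : G.IndepSetFree 3) (v : V) :
    Fintype.card V ≤ G.degree v + k + 1 := by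
  classical
  have := G.degree_compl_le_of_cliqueFree hk h3 v
  rw [degree_compl] at this
  omega

theorem even_card_of_isRegularOfDegree_odd [Fintype V] [DecidableRel G.Adj] {d : ℕ}
    (h : G.IsRegularOfDegree d) (hd : Odd d) : Even (Fintype.card V) := by
  have hsum := G.sum_degrees_eq_twice_card_edges
  simp only [h.degree_eq, Finset.sum_const, Finset.card_univ, smul_eq_mul] at hsum
  have : Even (Fintype.card V * d) := hsum ▸ even_two_mul _
  exact (Nat.even_mul.1 this).resolve_right (Nat.not_even_iff_odd.2 hd)

end SimpleGraph

open SimpleGraph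

-- `RamseyThreeBound k b` says that the Ramsey number `R(k, 3)` is at most `b + 1`.
def RamseyThreeBound (k b : ℕ) : Prop :=
  ∀ (V : Type) [Fintype V] (G : SimpleGraph V),
    G.CliqueFree k → G.IndepSetFree 3 → Fintype.card V ≤ b

namespace RamseyThreeBound

variable {k b : ℕ}

theorem degree_le (hb : RamseyThreeBound k b) {V : Type} [Fintype V] {G : SimpleGraph V}
    [DecidableRel G.Adj] (hk : G.CliqueFree (k + 1)) (h3 : G.IndepSetFree 3) (v : V) :
    G.degree v ≤ b := by
  rw [← card_neighborSet_eq_degree]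
  exact hb _ (G.induce (G.neighborSet v)) (hk.induce_neighborSet v) (h3.induce _)

theorem succ (hb : RamseyThreeBound k b) : RamseyThreeBound (k + 1) (b + k + 1) := by
  intro V _ G hk h3
  classical
  rcases isEmpty_or_nonempty V with hV | ⟨⟨v⟩⟩
  · simp
  have := card_le_degree_add_of_cliqueFree hk h3 v
  have := hb.degree_le hk h3 v
  omega

end RamseyThreeBound

theorem ramseyThreeBound_one : RamseyThreeBound 1 0 := by
  intro V _ G h1 _
  have := cliqueFree_one.1 h1
  simp

theorem ramseyThreeBound_four : RamseyThreeBound 4 8 := by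
  have hb3 : RamseyThreeBound 3 5 := ramseyThreeBound_one.succ.succ
  intro V _ G hk hi
  classical
  by_contra! hcard
  have hnine : Fintype.card V = 9 := by
    have := hb3.succ V G hk hi
    omega
  have hreg : G.IsRegularOfDegree 5 := fun v => by
    have := hb3.degree_le hk hi v
    have := card_le_degree_add_of_cliqueFree hk hi v
    omega
  have heven := even_card_of_isRegularOfDegree_odd hreg (by decide)
  rw [hnine] at heven
  exact absurd heven (by decide)

theorem ramseyThreeBound_five : RamseyThreeBound 5 13 := ramseyThreeBound_four.succ

theorem Finset.card_le_of_pairwise_of_forall_subset {α : Type*} {M : Finset α} {k : ℕ}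
    {P : α → α → Prop} (h : ∀ S ⊆ M, (∀ s ∈ S, ∀ t ∈ S, s ≠ t → P s t) → S.card ≤ k)
    {S : Finset {s // s ∈ M}} (hS : (S : Set {s // s ∈ M}).Pairwise fun s t => P s t) :
    S.card ≤ k := by
  rw [← Finset.card_map (.subtype _)]
  refine h _ (fun s hs => ?_) (fun s hs t ht hst => ?_)
  · obtain ⟨a, -, rfl⟩ := Finset.mem_map.1 hs
    exact a.2
  · obtain ⟨a, ha, rfl⟩ := Finset.mem_map.1 hs
    obtain ⟨b, hb, rfl⟩ := Finset.mem_map.1 ht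
    exact hS ha hb fun e => hst (congrArg _ e)

namespace IsKLArrangement

variable {M : Finset Seg} {k l : ℕ}

theorem cliqueFree (hM : IsKLArrangement M k l) : (interGraph M).CliqueFree (k + 1) := by
  intro S hS
  have := Finset.card_le_of_pairwise_of_forall_subset hM.2.1 (hS.1.mono' fun _ _ h => h.2)
  have := hS.card_eq
  omega

theorem indepSetFree (hM : IsKLArrangement M k l) : (interGraph M).IndepSetFree (l + 1) := by
  intro S hS
  have := Finset.card_le_of_pairwise_of_forall_subset hM.2.2
    (P := fun s t => ¬ s.Crosses t) fun s hs t ht hst hc => hS.1 hs ht hst ⟨hst, hc⟩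
  have := hS.card_eq
  omega

end IsKLArrangement

/-- Every simple graph with more than `13` vertices contains a clique of size `5` or an
independent set of size `3`; consequently every `(4,2)`-arrangement has at most `13`
segments. -/
theorem ramsey_bound_and_max_42_arrangement :
    (∀ (V : Type) [Fintype V] (G : SimpleGraph V), 13 < Fintype.card V →
      (∃ S : Finset V, G.IsNClique 5 S) ∨ (∃ S : Finset V, Gᶜ.IsNClique 3 S)) ∧
    ∀ M : Finset Seg, IsKLArrangement M 4 2 → M.card ≤ 13 := by
  refine ⟨fun V _ G hV => ?_, fun M hM => ?_⟩
  · by_contra! h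
    have hk : G.CliqueFree 5 := h.1
    have h3 : G.IndepSetFree 3 := (cliqueFree_compl G).1 h.2
    exact hV.not_ge (ramseyThreeBound_five V G hk h3)
  · simpa using ramseyThreeBound_five _ (interGraph M) hM.cliqueFree hM.indepSetFree
end
end
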